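/- Theorem 5 (existence part): For every positive integer n and every positive integer m that is either odd or equal to 2, there exists an order-m Hadamard hypermatrix of side length 2^n: a hypermatrix H : (Fin m → Fin (2^n)) → ℂ with every entry equal to −1 or 1 such that the BM product of the m-tuple (H, H^{⊤^{m−1}}, …, H^{⊤^2}, H^⊤) has entry 2^n at every constant index and entry 0 at every non-constant index. -/

import Mathlib

/-!
Read an index in `Fin (2 ^ n)` as a bit vector in `(ZMod 2)ⁿ` and put
`H x = (-1) ^ ⟨x 1, (D (x · κ))_κ⟩` for a Boolean function `D` on `(ZMod 2)ᵐ` that ignores its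
coordinate `1`. In the BM product, the summation index `j` sits in exactly the coordinate that the
`D` of every factor ignores, so the product over `t` equals `(-1) ^ ⟨j, w⟩` with
`w κ = ∑ₜ D (κ-th bit slice of i, shifted by t)`, and the sum over `j` is `2 ^ n` if `w = 0` and
`0` otherwise. So it suffices that the cyclic shifts of `D` sum to `0` on constant words and to `1`
on all others. For `m = 2` take `D z = z 0`. For odd `m` let `D z = 0` iff every cyclic descent
`z j = 1, z (j + 1) = 0` sits at `j ∈ {0, 1}`. Then `∑ₜ D (z ∘ (· + t))` is `m` minus the number
of shifts `t` with all descents of `z` in `{t, t + 1}`: all `m` shifts for a constant word, exactly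
`t = j - 1, j` for a word whose only descent is at `j`, and none for a word with several
descents.
-/

/-- The BM product of an `m`-tuple of order-`m` cubic hypermatrices over index type `I`. -/
noncomputable def bmProd {m : ℕ} [NeZero m] {I : Type*} [Fintype I] [DecidableEq I]
    (A : Fin m → ((Fin m → I) → ℂ)) : (Fin m → I) → ℂ :=
  fun i => ∑ j : I, ∏ t : Fin m, A t (Function.update i (t + 1) j)

/-- The hypermatrix transpose (cyclic permutation of indices). -/
noncomputable def hTranspose {m : ℕ} [NeZero m] {I : Type*}
    (A : (Fin m → I) → ℂ) : (Fin m → I) → ℂ :=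
  fun i => A (fun s => i (s - 1))

/-- The `m`-tuple `(H, H^{⊤^{m−1}}, …, H^{⊤^2}, H^⊤)` whose `t`-th member (0-based) is
`H^{⊤^{(m−t) mod m}}`. -/
noncomputable def towerTuple {m : ℕ} [NeZero m] {I : Type*}
    (H : (Fin m → I) → ℂ) : Fin m → ((Fin m → I) → ℂ) :=
  fun t => hTranspose^[(m - t.val) % m] H

open Finset Function

lemma AddChar.map_sum_eq_prod {ι A M : Type*} [AddCommMonoid A] [CommMonoid M]
    (ψ : AddChar A M) (s : Finset ι) (f : ι → A) : ψ (∑ i ∈ s, f i) = ∏ i ∈ s, ψ (f i) :=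
  map_prod ψ.toMonoidHom (fun i => Multiplicative.ofAdd (f i)) s

noncomputable def signChar : AddChar (ZMod 2) ℂ := AddChar.zmodChar 2 (ζ := -1) (by norm_num)

lemma signChar_eq_one_or_eq_neg_one (x : ZMod 2) : signChar x = 1 ∨ signChar x = -1 := by
  simpa [signChar, AddChar.zmodChar_apply] using neg_one_pow_eq_or ℂ x.val

lemma sum_signChar_mul (c : ZMod 2) : ∑ b, signChar (b * c) = if c = 0 then 2 else 0 := by
  rw [signChar, AddChar.sum_mulShift c (AddChar.zmodChar_primitive_of_primitive_root 2 _)]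
  · simp
  · exact IsPrimitiveRoot.neg_one 0 (by norm_num)

lemma sum_signChar_dotProduct {n : ℕ} (v : Fin n → ZMod 2) :
    ∑ u, signChar (u ⬝ᵥ v) = if v = 0 then 2 ^ n else 0 := by
  simp_rw [dotProduct, AddChar.map_sum_eq_prod]
  rw [← Fintype.prod_sum fun κ b => signChar (b * v κ)]
  simp_rw [sum_signChar_mul, prod_ite_zero, funext_iff]
  simp

open Fin.NatCast in
lemma hTranspose_iterate_apply {m : ℕ} [NeZero m] {I : Type*} (k : ℕ) (A : (Fin m → I) → ℂ)
    (x : Fin m → I) : hTranspose^[k] A x = A (fun s => x (s - k)) := by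
  induction k generalizing x with
  | zero => simp
  | succ k ih =>
    rw [iterate_succ_apply', hTranspose, ih, Nat.cast_succ]
    simp only [sub_sub]

open Fin.NatCast in
lemma towerTuple_apply {m : ℕ} [NeZero m] {I : Type*} (H : (Fin m → I) → ℂ)
    (t : Fin m) (x : Fin m → I) : towerTuple H t x = H (fun s => x (s + t)) := by
  have : (((m - t.val) % m : ℕ) : Fin m) = -t := by
    ext
    simp [Fin.neg_def]
  rw [towerTuple, hTranspose_iterate_apply, this]
  simp_rw [sub_neg_eq_add]

lemma bmProd_towerTuple {m : ℕ} [NeZero m] {I : Type*} [Fintype I] [DecidableEq I]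
    (H : (Fin m → I) → ℂ) (i : Fin m → I) :
    bmProd (towerTuple H) i =
      ∑ j, ∏ t : Fin m, H (update (fun s => i (s + t)) 1 j) := by
  refine sum_congr rfl fun j _ => prod_congr rfl fun t _ => ?_
  rw [towerTuple_apply]
  congr 1
  ext s
  simp only [update_apply, add_comm t 1, add_left_inj]

structure IsHadamardSlice {m : ℕ} [NeZero m] (D : (Fin m → ZMod 2) → ZMod 2) : Prop where
  update_one (z : Fin m → ZMod 2) (a : ZMod 2) : D (update z 1 a) = D z
  sum_shift (z : Fin m → ZMod 2) :
    ∑ t, D (fun s => z (s + t)) = if ∀ s t, z s = z t then 0 else 1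

/-- The `n`-fold Kronecker power of the order-`m`, side-`2` hypermatrix `z ↦ (-1) ^ (z 1 * D z)`,
its indices read as bit vectors through `e`. -/
noncomputable def sliceHypermatrix {m n : ℕ} [NeZero m] {I : Type*}
    (D : (Fin m → ZMod 2) → ZMod 2) (e : I ≃ (Fin n → ZMod 2)) : (Fin m → I) → ℂ :=
  fun x => signChar (e (x 1) ⬝ᵥ fun κ => D fun s => e (x s) κ)

namespace IsHadamardSlice

variable {m n : ℕ} [NeZero m] {I : Type*} {D : (Fin m → ZMod 2) → ZMod 2}

lemma sliceHypermatrix_update_one (hD : IsHadamardSlice D) (e : I ≃ (Fin n → ZMod 2))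
    (x : Fin m → I) (j : I) :
    sliceHypermatrix D e (update x 1 j) =
      signChar (e j ⬝ᵥ fun κ => D fun s => e (x s) κ) := by
  have h (κ : Fin n) : (fun s => e (update x 1 j s) κ) =
      update (fun s => e (x s) κ) 1 (e j κ) :=
    funext (apply_update (fun _ y => e y κ) x 1 j)
  simp only [sliceHypermatrix, update_self, h, hD.update_one]

lemma bmProd_towerTuple_sliceHypermatrix [Fintype I] [DecidableEq I] (hD : IsHadamardSlice D)
    (e : I ≃ (Fin n → ZMod 2)) (i : Fin m → I) :
    bmProd (towerTuple (sliceHypermatrix D e)) i = if ∀ s t, i s = i t then 2 ^ n else 0 := by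
  set w : Fin n → ZMod 2 := fun κ => if ∀ s t, e (i s) κ = e (i t) κ then 0 else 1
  have hw : ∀ j, ∏ t, sliceHypermatrix D e (update (fun s => i (s + t)) 1 j) =
      signChar (e j ⬝ᵥ w) := by
    intro j
    simp_rw [hD.sliceHypermatrix_update_one, ← AddChar.map_sum_eq_prod, ← dotProduct_sum]
    congr 2
    ext κ
    simp only [Finset.sum_apply, w, ← hD.sum_shift]
  have hw0 : w = 0 ↔ ∀ s t, i s = i t := by
    simp only [w, funext_iff, Pi.zero_apply, ite_eq_left_iff, one_ne_zero, imp_false, not_not,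
      ← e.injective.eq_iff]
    grind
  rw [bmProd_towerTuple]
  simp_rw [hw]
  rw [e.sum_comp (fun u => signChar (u ⬝ᵥ w)), sum_signChar_dotProduct]
  exact if_congr hw0 rfl rfl

end IsHadamardSlice

lemma isHadamardSlice_two : IsHadamardSlice fun z : Fin 2 → ZMod 2 => z 0 where
  update_one z a := update_of_ne (by decide : (0 : Fin 2) ≠ 1) a z
  sum_shift z := by
    simp only [Fin.sum_univ_two, zero_add, Fin.forall_fin_two]
    generalize z 0 = a, z 1 = b
    revert a b
    decide

section Descents

variable {m : ℕ} [NeZero m]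

def descents (z : Fin m → ZMod 2) : Finset (Fin m) := {j | z j = 1 ∧ z (j + 1) = 0}

open Fin.NatCast in
lemma descents_eq_empty_iff {z : Fin m → ZMod 2} : descents z = ∅ ↔ ∀ s t, z s = z t := by
  refine ⟨fun h => ?_, fun h => ?_⟩
  · have step (j : Fin m) (hj : z j = 1) : z (j + 1) = 1 := by
      have : j ∉ descents z := by simp [h]
      simp only [descents, mem_filter, mem_univ, true_and, hj] at this
      exact Fin.eq_one_of_ne_zero _ this
    have reach (s t : Fin m) (hs : z s = 1) : z t = 1 := by
      have (k : ℕ) : z (s + k) = 1 := by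
        induction k with
        | zero => simpa using hs
        | succ k ih => simpa [Nat.cast_succ, ← add_assoc] using step _ ih
      simpa using this (t - s).val
    have eq_of_iff (a b : ZMod 2) : (a = 1 ↔ b = 1) → a = b := by decide +revert
    exact fun s t => eq_of_iff _ _ ⟨reach s t, reach t s⟩
  · ext j
    simp +contextual [descents, h (j + 1) j]

lemma filter_descents_subset_eq {z : Fin m → ZMod 2} {j : Fin m} (hj : j ∈ descents z) :
    ({t | descents z ⊆ {t, t + 1}} : Finset (Fin m)) =
      if descents z ⊆ {j} then {j - 1, j} else ∅ := by
  have hj1 : j + 1 ∉ descents z := by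
    simp_all [descents]
  have hj0 : j - 1 ∉ descents z := by
    simp_all [descents]
  ext t
  simp only [subset_iff, mem_filter, mem_univ, true_and, mem_insert, mem_singleton]
  split_ifs with h
  · simp only [mem_insert, mem_singleton]
    grind
  · simp only [notMem_empty, iff_false]
    grind

lemma even_card_filter_descents_subset {z : Fin m → ZMod 2} (hz : ¬ ∀ s t, z s = z t) :
    Even #({t | descents z ⊆ {t, t + 1}} : Finset (Fin m)) := by
  obtain ⟨j, hj⟩ := nonempty_iff_ne_empty.2 (mt descents_eq_empty_iff.1 hz)
  rw [filter_descents_subset_eq hj]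
  split_ifs
  · rw [card_pair]
    · exact even_two
    · intro h
      have : j + 1 = j := by rw [sub_eq_self.1 h, add_zero]
      simp only [descents, mem_filter, mem_univ, true_and, this] at hj
      exact one_ne_zero (hj.1.symm.trans hj.2)
  · simp

def descentSlice (z : Fin m → ZMod 2) : ZMod 2 := if descents z ⊆ {0, 1} then 0 else 1

lemma descents_comp_add_subset_iff (z : Fin m → ZMod 2) (t : Fin m) :
    descents (fun s => z (s + t)) ⊆ {0, 1} ↔ descents z ⊆ {t, t + 1} := by
  simp only [subset_iff, descents, mem_filter, mem_univ, true_and, mem_insert, mem_singleton]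
  constructor
  · intro h j hj
    have := @h (j - t) (by rwa [sub_add_cancel, add_right_comm, sub_add_cancel])
    grind
  · intro h j hj
    have := h (by simpa [add_right_comm] using hj)
    grind

lemma descentSlice_update_one (z : Fin m → ZMod 2) (a : ZMod 2) :
    descentSlice (update z 1 a) = descentSlice z := by
  have hiff : descents (update z 1 a) ⊆ {0, 1} ↔ descents z ⊆ {0, 1} := by
    simp only [subset_iff, descents, mem_filter, mem_univ, true_and, mem_insert, mem_singleton]
    refine forall_congr' fun j => ?_
    by_cases hj : j = 0 ∨ j = 1
    · simp [hj]
    · have h1 : j ≠ 1 := by grind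
      have h2 : j + 1 ≠ 1 := by grind
      simp [update_of_ne h1, update_of_ne h2]
  simp only [descentSlice, hiff]

lemma isHadamardSlice_descentSlice (hm : Odd m) : IsHadamardSlice (descentSlice (m := m)) where
  update_one := descentSlice_update_one
  sum_shift z := by
    have h (t : Fin m) : descentSlice (fun s => z (s + t)) =
        1 - if descents z ⊆ {t, t + 1} then 1 else 0 := by
      simp only [descentSlice, descents_comp_add_subset_iff]
      split_ifs <;> simp
    simp only [h, sum_sub_distrib, sum_const, card_univ, Fintype.card_fin, nsmul_one,
      sum_boole, ZMod.natCast_eq_one_iff_odd.2 hm]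
    split_ifs with hz
    · rw [descents_eq_empty_iff.2 hz]
      simp [ZMod.natCast_eq_one_iff_odd.2 hm]
    · rw [ZMod.natCast_eq_zero_iff_even.2 (even_card_filter_descents_subset hz), sub_zero]

end Descents

theorem exists_hadamard_hypermatrix_general {m : ℕ} [NeZero m] (hm : Odd m ∨ m = 2)
    (n : ℕ) :
    ∃ H : (Fin m → Fin (2 ^ n)) → ℂ,
      (∀ i, H i = 1 ∨ H i = -1) ∧
      (∀ i : Fin m → Fin (2 ^ n), (∀ s t : Fin m, i s = i t) →
        bmProd (towerTuple H) i = (2 ^ n : ℂ)) ∧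
      (∀ i : Fin m → Fin (2 ^ n), (¬ ∀ s t : Fin m, i s = i t) →
        bmProd (towerTuple H) i = 0) := by
  obtain ⟨D, hD⟩ : ∃ D : (Fin m → ZMod 2) → ZMod 2, IsHadamardSlice D := by
    rcases hm with hm | rfl
    · exact ⟨_, isHadamardSlice_descentSlice hm⟩
    · exact ⟨_, isHadamardSlice_two⟩
  let e : Fin (2 ^ n) ≃ (Fin n → ZMod 2) := Fintype.equivOfCardEq (by simp)
  refine ⟨sliceHypermatrix D e, fun i => signChar_eq_one_or_eq_neg_one _, fun i hi => ?_,
    fun i hi => ?_⟩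
  · rw [hD.bmProd_towerTuple_sliceHypermatrix, if_pos hi]
  · rw [hD.bmProd_towerTuple_sliceHypermatrix, if_neg hi]

/-- Theorem 5 (existence part): for every positive `n` and every positive `m` which is
odd or equal to `2`, there is an order-`m` Hadamard hypermatrix of side length `2^n`. -/
theorem exists_hadamard_hypermatrix {m : ℕ} [NeZero m] (hm : Odd m ∨ m = 2)
    (n : ℕ) (hn : 0 < n) :
    ∃ H : (Fin m → Fin (2 ^ n)) → ℂ,
      (∀ i, H i = 1 ∨ H i = -1) ∧
      (∀ i : Fin m → Fin (2 ^ n), (∀ s t : Fin m, i s = i t) →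
        bmProd (towerTuple H) i = (2 ^ n : ℂ)) ∧
      (∀ i : Fin m → Fin (2 ^ n), (¬ ∀ s t : Fin m, i s = i t) →
        bmProd (towerTuple H) i = 0) :=
  exists_hadamard_hypermatrix_general hm n
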